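/- arXiv:1411.5977 — 11 statements merged into one kernel-verified Lean document; each statement's English description precedes it below -/
import Mathlib

section
/- Let W_max > 0 be a real number and let L : ℝ × ℝ → ℝ be a function. Suppose L satisfies Axiom 1 (distinguishing worker abilities) and Axiom 2 (modeling spammers). Then L is not convex on the rectangle [0,1] × [0,W_max]; that is, there is no function satisfying both axioms that is jointly convex in its two arguments on [0,1] × [0,W_max]. -/
/-- No objective function `L` satisfying Axiom 1 (distinguishing worker
abilities) and Axiom 2 (modeling spammers) can be convex on `[0,1] × [0,Wmax]`. -/
theorem stmt_0 (Wmax : ℝ) (hW : 0 < Wmax) (L : ℝ × ℝ → ℝ)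
    (ax1 : ∃ ε > (0 : ℝ),
      (∀ x w : ℝ, x ∈ Set.Ioo 0 ε → w ∈ Set.Ioo 0 ε → L (x, w) > L (x, 0)) ∧
      (∀ x w : ℝ, x ∈ Set.Ioo (1 - ε) 1 → w ∈ Set.Ioo 0 ε → L (x, w) < L (x, 0)))
    (ax2 : ∀ x ∈ Set.Icc (0 : ℝ) 1, ∀ x' ∈ Set.Icc (0 : ℝ) 1, L (x, 0) = L (x', 0)) :
    ¬ ConvexOn ℝ (Set.Icc (0 : ℝ) 1 ×ˢ Set.Icc (0 : ℝ) Wmax) L := by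
  intro hconv
  obtain ⟨ε, hε, h1, h2⟩ := ax1
  set e : ℝ := min ε 1 with he
  have he0 : 0 < e := lt_min hε one_pos
  have he1 : e ≤ 1 := min_le_right _ _
  have heε : e ≤ ε := min_le_left _ _
  set t : ℝ := e / 2 with ht
  have ht0 : 0 < t := by positivity
  have ht1 : t < 1 := by
    have : t ≤ 1 / 2 := by linarith
    linarith
  set x2 : ℝ := 1 - e / 2 with hx2
  have hx2mem : x2 ∈ Set.Ioo (1 - ε) 1 := by
    constructor
    · simp only [hx2]; linarith
    · simp only [hx2]; linarith
  set w : ℝ := min ε Wmax / 2 with hw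
  have hw0 : 0 < w := by positivity
  have hwε : w < ε := by
    have : min ε Wmax ≤ ε := min_le_left _ _
    simp only [hw]; linarith
  have hwW : w ≤ Wmax := by
    have : min ε Wmax ≤ Wmax := min_le_right _ _
    simp only [hw]; linarith
  -- memberships in the rectangle
  have hp : ((0 : ℝ), (0 : ℝ)) ∈ Set.Icc (0 : ℝ) 1 ×ˢ Set.Icc (0 : ℝ) Wmax := by
    constructor <;> constructor <;> norm_num; exact hW.le
  have hqx : x2 ∈ Set.Icc (0 : ℝ) 1 := by
    constructor
    · simp only [hx2]; linarith
    · simp only [hx2]; linarith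
  have hq : ((x2 : ℝ), w) ∈ Set.Icc (0 : ℝ) 1 ×ˢ Set.Icc (0 : ℝ) Wmax :=
    ⟨hqx, ⟨hw0.le, hwW⟩⟩
  have key := hconv.2 hp hq (show (0:ℝ) ≤ 1 - t by linarith) ht0.le (show (1 - t) + t = 1 by ring)
  have hcomb : (1 - t) • ((0 : ℝ), (0 : ℝ)) + t • ((x2 : ℝ), w) = (t * x2, t * w) := by
    simp [Prod.smul_mk, Prod.mk_add_mk, smul_eq_mul]
  rw [hcomb] at key
  -- the constant value of L on the bottom edge
  have hx2'0 : 0 < x2 := by simp only [hx2]; linarith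
  have hx1 : t * x2 ∈ Set.Ioo (0 : ℝ) ε := by
    constructor
    · positivity
    · have : t * x2 < t * 1 := by
        apply mul_lt_mul_of_pos_left _ ht0
        simp only [hx2]; linarith
      have : t * x2 < t := by linarith
      have : t < ε := by simp only [ht]; linarith
      linarith
  have hw1 : t * w ∈ Set.Ioo (0 : ℝ) ε := by
    constructor
    · positivity
    · have : t * w < 1 * w := by
        apply mul_lt_mul_of_pos_right ht1 hw0
      linarith
  have hx1mem : t * x2 ∈ Set.Icc (0 : ℝ) 1 := by
    constructor
    · positivity
    · exact mul_le_one₀ ht1.le hx2'0.le hqx.2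
  have hc1 : L (t * x2, 0) = L (0, 0) :=
    ax2 _ hx1mem 0 (by norm_num)
  have hc2 : L (x2, 0) = L (0, 0) :=
    ax2 _ hqx 0 (by norm_num)
  have hA : L (t * x2, t * w) > L (0, 0) := hc1 ▸ h1 _ _ hx1 hw1
  have hB : L (x2, w) < L (0, 0) := hc2 ▸ h2 _ _ hx2mem ⟨hw0, hwε⟩
  have : (1 - t) • L (0, 0) + t • L (x2, w) < L (0, 0) := by
    simp only [smul_eq_mul]
    nlinarith
  linarith
end

section
/- Let W_max > 0 be a real number and let L : ℝ × ℝ → ℝ be a function satisfying Property P2 (monotonicity in worker ability). Then L satisfies Axiom 1 (distinguishing worker abilities): there exists ε > 0 such that L(x,w) > L(x,0) for all (x,w) ∈ (0,ε) × (0,ε), and L(x,w) < L(x,0) for all (x,w) ∈ (1−ε,1) × (0,ε). -/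
/-- Any objective function `L` satisfying Property P2 (monotonicity in
worker ability) also satisfies Axiom 1 (distinguishing worker abilities). -/
theorem stmt_1 (Wmax : ℝ) (hW : 0 < Wmax) (L : ℝ × ℝ → ℝ)
    (p2 : ∃ g : ℝ → ℝ,
      (∀ w ∈ Set.Ico (0 : ℝ) Wmax, g w ∈ Set.Ico (1/2 : ℝ) 1) ∧
      (∀ w1 w2 : ℝ, 0 ≤ w1 → w1 ≤ w2 → w2 < Wmax → g w1 ≤ g w2) ∧
      (∀ x ∈ Set.Icc (0 : ℝ) 1, ∀ w1 w2 : ℝ, 0 ≤ w1 → w1 < w2 → w2 < Wmax →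
        (x < g w1 → L (x, w1) < L (x, w2)) ∧ (x > g w2 → L (x, w1) > L (x, w2)))) :
    ∃ ε > (0 : ℝ),
      (∀ x w : ℝ, x ∈ Set.Ioo 0 ε → w ∈ Set.Ioo 0 ε → L (x, w) > L (x, 0)) ∧
      (∀ x w : ℝ, x ∈ Set.Ioo (1 - ε) 1 → w ∈ Set.Ioo 0 ε → L (x, w) < L (x, 0)) := by
  obtain ⟨g, hg, hmono, hL⟩ := p2
  have hWhalf : Wmax / 2 ∈ Set.Ico (0 : ℝ) Wmax := ⟨by linarith, by linarith⟩
  have hgW := hg _ hWhalf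
  have hg0 := hg 0 ⟨le_refl 0, hW⟩
  set ε : ℝ := min (1/2) (min (Wmax/2) (1 - g (Wmax/2))) with hε
  have hε1 : ε ≤ 1/2 := min_le_left _ _
  have hε2 : ε ≤ Wmax/2 := le_trans (min_le_right _ _) (min_le_left _ _)
  have hε3 : ε ≤ 1 - g (Wmax/2) := le_trans (min_le_right _ _) (min_le_right _ _)
  have hεpos : 0 < ε := by
    refine lt_min (by norm_num) (lt_min (by linarith) (by linarith [hgW.2]))
  refine ⟨ε, hεpos, ?_, ?_⟩
  · intro x w hx hw
    have hxI : x ∈ Set.Icc (0 : ℝ) 1 := ⟨hx.1.le, by linarith [hx.2]⟩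
    have hwW : w < Wmax := by linarith [hw.2]
    exact (hL x hxI 0 w le_rfl hw.1 hwW).1 (by linarith [hx.2, hg0.1])
  · intro x w hx hw
    have hxI : x ∈ Set.Icc (0 : ℝ) 1 := ⟨by linarith [hx.1], hx.2.le⟩
    have hwW : w < Wmax := by linarith [hw.2]
    have hgw : g w ≤ g (Wmax/2) := hmono w (Wmax/2) hw.1.le (by linarith [hw.2]) (by linarith)
    exact (hL x hxI 0 w le_rfl hw.1 hwW).2 (by linarith [hx.1])
end

section
/- Let W_max > 0 be a real number and let L : ℝ × ℝ → ℝ be a function satisfying Property P2 (monotonicity in worker ability) and Axiom 2 (modeling spammers). Then L is not convex on the rectangle [0,1] × [0,W_max]. -/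
/-- Any objective function `L` satisfying Property P2 (monotonicity in
worker ability) and Axiom 2 (modeling spammers) is not convex on `[0,1] × [0,Wmax]`. -/
theorem stmt_2 (Wmax : ℝ) (hW : 0 < Wmax) (L : ℝ × ℝ → ℝ)
    (p2 : ∃ g : ℝ → ℝ,
      (∀ w ∈ Set.Ico (0 : ℝ) Wmax, g w ∈ Set.Ico (1/2 : ℝ) 1) ∧
      (∀ w1 w2 : ℝ, 0 ≤ w1 → w1 ≤ w2 → w2 < Wmax → g w1 ≤ g w2) ∧
      (∀ x ∈ Set.Icc (0 : ℝ) 1, ∀ w1 w2 : ℝ, 0 ≤ w1 → w1 < w2 → w2 < Wmax →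
        (x < g w1 → L (x, w1) < L (x, w2)) ∧ (x > g w2 → L (x, w1) > L (x, w2))))
    (ax2 : ∀ x ∈ Set.Icc (0 : ℝ) 1, ∀ x' ∈ Set.Icc (0 : ℝ) 1, L (x, 0) = L (x', 0)) :
    ¬ ConvexOn ℝ (Set.Icc (0 : ℝ) 1 ×ˢ Set.Icc (0 : ℝ) Wmax) L := by
  intro hconv
  obtain ⟨g, hg, hmono, hP⟩ := p2
  set w := Wmax / 2 with hw
  have hw0 : 0 < w := by positivity
  have hwW : w < Wmax := by simp only [hw]; linarith
  have hg0 : g 0 ∈ Set.Ico (1/2 : ℝ) 1 := hg 0 ⟨le_refl 0, hW⟩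
  have hgw : g w ∈ Set.Ico (1/2 : ℝ) 1 := hg w ⟨hw0.le, hwW⟩
  have h1 : L (1, 0) > L (1, w) :=
    (hP 1 ⟨zero_le_one, le_refl 1⟩ 0 w le_rfl hw0 hwW).2 hgw.2
  have hq0 : (0:ℝ) < w/4 := by positivity
  have h2 : L (1/4, 0) < L (1/4, w/4) :=
    (hP (1/4) ⟨by norm_num, by norm_num⟩ 0 (w/4) le_rfl hq0 (by linarith)).1
      (lt_of_lt_of_le (by norm_num) hg0.1)
  have hc1 : L (1, 0) = L (0, 0) := ax2 1 ⟨zero_le_one, le_rfl⟩ 0 ⟨le_rfl, zero_le_one⟩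
  have hc2 : L (1/4, 0) = L (0, 0) :=
    ax2 (1/4) ⟨by norm_num, by norm_num⟩ 0 ⟨le_rfl, zero_le_one⟩
  have ha : ((1:ℝ), w) ∈ Set.Icc (0:ℝ) 1 ×ˢ Set.Icc (0:ℝ) Wmax :=
    ⟨⟨zero_le_one, le_rfl⟩, ⟨hw0.le, hwW.le⟩⟩
  have hb : ((0:ℝ), (0:ℝ)) ∈ Set.Icc (0:ℝ) 1 ×ˢ Set.Icc (0:ℝ) Wmax :=
    ⟨⟨le_rfl, zero_le_one⟩, ⟨le_rfl, hW.le⟩⟩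
  have hcv := hconv.2 ha hb (by norm_num : (0:ℝ) ≤ 1/4) (by norm_num : (0:ℝ) ≤ 3/4)
    (by norm_num)
  have hpt : (1/4 : ℝ) • ((1:ℝ), w) + (3/4 : ℝ) • ((0:ℝ), (0:ℝ)) = ((1/4 : ℝ), w/4) := by
    simp [Prod.ext_iff, Prod.smul_mk]
    ring
  rw [hpt] at hcv
  simp only [smul_eq_mul] at hcv
  linarith
end

section
/- The function L : ℝ × ℝ → ℝ defined by L(x,w) = −w − x − 1 if w ≤ 2x − 1 and L(x,w) = w − 5x + 1 if w ≥ 2x − 1 is strictly decreasing in x for every fixed w ∈ [0,1]: for all 0 ≤ x1 < x2 ≤ 1 and all w ∈ [0,1], L(x1,w) > L(x2,w). -/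
/-- The piecewise function `L(x,w) = -w - x - 1` if `w ≤ 2x - 1` and
`L(x,w) = w - 5x + 1` if `w ≥ 2x - 1` is strictly decreasing in `x` on `[0,1]` for
every fixed `w ∈ [0,1]`. -/
theorem stmt_4 (L : ℝ × ℝ → ℝ)
    (hL : ∀ x w : ℝ, (w ≤ 2*x - 1 → L (x, w) = -w - x - 1) ∧
      (2*x - 1 ≤ w → L (x, w) = w - 5*x + 1)) :
    ∀ x1 x2 : ℝ, 0 ≤ x1 → x1 < x2 → x2 ≤ 1 →
      ∀ w ∈ Set.Icc (0 : ℝ) 1, L (x1, w) > L (x2, w) := by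
  intro x1 x2 h0 h12 h2 w hw
  obtain ⟨h1a, h1b⟩ := hL x1 w
  obtain ⟨h2a, h2b⟩ := hL x2 w
  rcases le_or_gt w (2*x1 - 1) with hc1 | hc1
  · rw [h1a hc1, h2a (hc1.trans (by linarith))]; linarith
  · rw [h1b hc1.le]
    rcases le_or_gt w (2*x2 - 1) with hc2 | hc2
    · rw [h2a hc2]; linarith
    · rw [h2b hc2.le]; linarith
end

section
/- The function L : ℝ × ℝ → ℝ defined by L(x,w) = −w − x − 1 if w ≤ 2x − 1 and L(x,w) = w − 5x + 1 if w ≥ 2x − 1 satisfies Property P2 (monotonicity in worker ability) with W_max = 1 and g(w) = (1+w)/2: g is non-decreasing from [0,1) into [1/2,1), and for all x ∈ [0,1] and all w1, w2 with 0 ≤ w1 < w2 < 1: if x < (1+w1)/2 then L(x,w1) < L(x,w2), and if x > (1+w2)/2 then L(x,w1) > L(x,w2). -/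
/-- The piecewise function `L(x,w) = -w - x - 1` if `w ≤ 2x - 1` and
`L(x,w) = w - 5x + 1` if `w ≥ 2x - 1` satisfies Property P2 (monotonicity in worker
ability) with `W_max = 1` and `g(w) = (1+w)/2`. -/
theorem stmt_5 (L : ℝ × ℝ → ℝ)
    (hL : ∀ x w : ℝ, (w ≤ 2*x - 1 → L (x, w) = -w - x - 1) ∧
      (2*x - 1 ≤ w → L (x, w) = w - 5*x + 1)) :
    (∀ w ∈ Set.Ico (0 : ℝ) 1, (1 + w)/2 ∈ Set.Ico (1/2 : ℝ) 1) ∧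
    (∀ w1 w2 : ℝ, 0 ≤ w1 → w1 ≤ w2 → w2 < 1 → (1 + w1)/2 ≤ (1 + w2)/2) ∧
    (∀ x ∈ Set.Icc (0 : ℝ) 1, ∀ w1 w2 : ℝ, 0 ≤ w1 → w1 < w2 → w2 < 1 →
      (x < (1 + w1)/2 → L (x, w1) < L (x, w2)) ∧
      (x > (1 + w2)/2 → L (x, w1) > L (x, w2))) := by
  refine ⟨fun w hw => ⟨by linarith [hw.1], by linarith [hw.2]⟩,
    fun w1 w2 h0 h12 h2 => by linarith, ?_⟩
  intro x hx w1 w2 h0 h12 h2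
  constructor
  · intro hlt
    have h1 : 2*x - 1 ≤ w1 := by linarith
    have h2' : 2*x - 1 ≤ w2 := by linarith
    rw [(hL x w1).2 h1, (hL x w2).2 h2']
    linarith
  · intro hgt
    have h1 : w1 ≤ 2*x - 1 := by linarith
    have h2' : w2 ≤ 2*x - 1 := by linarith
    rw [(hL x w1).1 h1, (hL x w2).1 h2']
    linarith
end

section
/- The function L : ℝ × ℝ → ℝ defined by L(x,w) = −w − x − 1 if w ≤ 2x − 1 and L(x,w) = w − 5x + 1 if w ≥ 2x − 1 satisfies Axiom 1 (distinguishing worker abilities): there exists ε > 0 such that L(x,w) > L(x,0) for all (x,w) ∈ (0,ε) × (0,ε), and L(x,w) < L(x,0) for all (x,w) ∈ (1−ε,1) × (0,ε). -/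
/-- The piecewise function `L(x,w) = -w - x - 1` if `w ≤ 2x - 1` and
`L(x,w) = w - 5x + 1` if `w ≥ 2x - 1` satisfies Axiom 1 (distinguishing worker
abilities). -/
theorem stmt_6 (L : ℝ × ℝ → ℝ)
    (hL : ∀ x w : ℝ, (w ≤ 2*x - 1 → L (x, w) = -w - x - 1) ∧
      (2*x - 1 ≤ w → L (x, w) = w - 5*x + 1)) :
    ∃ ε > (0 : ℝ),
      (∀ x w : ℝ, x ∈ Set.Ioo 0 ε → w ∈ Set.Ioo 0 ε → L (x, w) > L (x, 0)) ∧
      (∀ x w : ℝ, x ∈ Set.Ioo (1 - ε) 1 → w ∈ Set.Ioo 0 ε → L (x, w) < L (x, 0)) := by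
  refine ⟨1/4, by norm_num, ?_, ?_⟩
  · rintro x w ⟨hx0, hx1⟩ ⟨hw0, hw1⟩
    rw [(hL x w).2 (by linarith), (hL x 0).2 (by linarith)]
    linarith
  · rintro x w ⟨hx0, hx1⟩ ⟨hw0, hw1⟩
    rw [(hL x w).1 (by linarith), (hL x 0).1 (by linarith)]
    linarith
end

section
/- Let n > 0 be a real number and define the Dawid–Skene objective L(x,w) = −n·(x·log((1+w)/2) + (1−x)·log((1−w)/2)). Then L satisfies Property P2 with g(w) = (1+w)/2: for all x ∈ [0,1] and all w1, w2 with 0 ≤ w1 < w2 < 1, if w1 > 2x − 1 then L(x,w1) < L(x,w2), and if w2 < 2x − 1 then L(x,w1) > L(x,w2). Equivalently, for every x ∈ [0,1] and w ∈ [0,1), the partial derivative of L with respect to w equals −n·(x/(1+w) − (1−x)/(1−w)), which is positive when w > 2x − 1 and negative when w < 2x − 1. -/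
/-! The partial derivative in `w` factors as `n (1 + w - 2x) / ((1 + w)(1 - w))` on `(-1, 1)`,
so its sign is that of `w - (2x - 1)`. Hence `L(x, ·)` is strictly increasing on the part of
`(-1, 1)` to the right of `2x - 1` and strictly decreasing on the part to its left, by the
mean value theorem. -/

open Set Real

namespace DawidSkene

noncomputable def objective (n x w : ℝ) : ℝ :=
  -n * (x * log ((1 + w) / 2) + (1 - x) * log ((1 - w) / 2))

variable {n x w : ℝ}

theorem hasDerivAt_objective (hw : w ∈ Ioo (-1) 1) :
    HasDerivAt (objective n x) (-n * (x / (1 + w) - (1 - x) / (1 - w))) w := by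
  obtain ⟨hw₀, hw₁⟩ := hw
  have hplus : HasDerivAt (fun w : ℝ => (1 + w) / 2) (1 / 2) w :=
    ((hasDerivAt_id w).const_add 1).div_const 2
  have hminus : HasDerivAt (fun w : ℝ => (1 - w) / 2) (-1 / 2) w :=
    ((hasDerivAt_id w).const_sub 1).div_const 2
  have hlog := ((hplus.log (by linarith)).const_mul x).add
    ((hminus.log (by linarith)).const_mul (1 - x))
  refine (hlog.const_mul (-n)).congr_deriv ?_
  have : 1 + w ≠ 0 := by linarith
  have : 1 - w ≠ 0 := by linarith
  field_simp
  ring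

theorem objective_deriv_eq (hw : w ∈ Ioo (-1) 1) :
    -n * (x / (1 + w) - (1 - x) / (1 - w)) = n * (1 + w - 2 * x) / ((1 + w) * (1 - w)) := by
  have : 1 + w ≠ 0 := by linarith [hw.1]
  have : 1 - w ≠ 0 := by linarith [hw.2]
  field_simp
  ring

theorem objective_deriv_pos (hn : 0 < n) (hw : w ∈ Ioo (-1) 1) (hxw : 2 * x - 1 < w) :
    0 < -n * (x / (1 + w) - (1 - x) / (1 - w)) := by
  rw [objective_deriv_eq hw]
  have : 0 < 1 + w := by linarith [hw.1]
  have : 0 < 1 - w := by linarith [hw.2]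
  have : 0 < 1 + w - 2 * x := by linarith
  positivity

theorem objective_deriv_neg (hn : 0 < n) (hw : w ∈ Ioo (-1) 1) (hwx : w < 2 * x - 1) :
    -n * (x / (1 + w) - (1 - x) / (1 - w)) < 0 := by
  rw [objective_deriv_eq hw]
  have : 0 < 1 + w := by linarith [hw.1]
  have : 0 < 1 - w := by linarith [hw.2]
  exact div_neg_of_neg_of_pos (mul_neg_of_pos_of_neg hn (by linarith)) (by positivity)

theorem continuousOn_objective : ContinuousOn (objective n x) (Ioo (-1) 1) :=
  fun _ hw => (hasDerivAt_objective hw).continuousAt.continuousWithinAt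

theorem strictMonoOn_objective (hn : 0 < n) :
    StrictMonoOn (objective n x) (Ioo (-1) 1 ∩ Ici (2 * x - 1)) := by
  refine strictMonoOn_of_deriv_pos ((convex_Ioo _ _).inter (convex_Ici _))
    (continuousOn_objective.mono inter_subset_left) fun w hw => ?_
  rw [interior_inter, interior_Ioo, interior_Ici] at hw
  rw [(hasDerivAt_objective hw.1).deriv]
  exact objective_deriv_pos hn hw.1 hw.2

theorem strictAntiOn_objective (hn : 0 < n) :
    StrictAntiOn (objective n x) (Ioo (-1) 1 ∩ Iic (2 * x - 1)) := by
  refine strictAntiOn_of_deriv_neg ((convex_Ioo _ _).inter (convex_Iic _))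
    (continuousOn_objective.mono inter_subset_left) fun w hw => ?_
  rw [interior_inter, interior_Ioo, interior_Iic] at hw
  rw [(hasDerivAt_objective hw.1).deriv]
  exact objective_deriv_neg hn hw.1 hw.2

end DawidSkene

open DawidSkene in
/-- The Dawid–Skene objective
`L(x,w) = -n (x log((1+w)/2) + (1-x) log((1-w)/2))` with `n > 0` satisfies Property P2
with `g(w) = (1+w)/2`: for `x ∈ [0,1]` and `0 ≤ w1 < w2 < 1`, if `w1 > 2x - 1` then
`L(x,w1) < L(x,w2)`, and if `w2 < 2x - 1` then `L(x,w1) > L(x,w2)`. Equivalently, the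
partial derivative with respect to `w` equals `-n (x/(1+w) - (1-x)/(1-w))`, which is
positive when `w > 2x - 1` and negative when `w < 2x - 1`. -/
theorem stmt_8 (n : ℝ) (hn : 0 < n) (L : ℝ × ℝ → ℝ)
    (hL : ∀ x w : ℝ,
      L (x, w) = -n * (x * Real.log ((1 + w)/2) + (1 - x) * Real.log ((1 - w)/2))) :
    (∀ x ∈ Set.Icc (0 : ℝ) 1, ∀ w1 w2 : ℝ, 0 ≤ w1 → w1 < w2 → w2 < 1 →
      (2*x - 1 < w1 → L (x, w1) < L (x, w2)) ∧
      (w2 < 2*x - 1 → L (x, w1) > L (x, w2))) ∧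
    (∀ x ∈ Set.Icc (0 : ℝ) 1, ∀ w ∈ Set.Ico (0 : ℝ) 1,
      HasDerivAt (fun w => L (x, w)) (-n * (x/(1 + w) - (1 - x)/(1 - w))) w ∧
      (2*x - 1 < w → 0 < -n * (x/(1 + w) - (1 - x)/(1 - w))) ∧
      (w < 2*x - 1 → -n * (x/(1 + w) - (1 - x)/(1 - w)) < 0)) := by
  have mem_Ioo : ∀ {w}, 0 ≤ w → w < 1 → w ∈ Ioo (-1 : ℝ) 1 :=
    fun h₀ h₁ => ⟨by linarith, h₁⟩
  refine ⟨fun x _ w1 w2 hw1 h12 hw2 => ⟨fun hx => ?_, fun hx => ?_⟩,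
    fun x _ w ⟨hw₀, hw₁⟩ => ?_⟩
  · rw [hL, hL]
    exact strictMonoOn_objective hn ⟨mem_Ioo hw1 (h12.trans hw2), hx.le⟩
      ⟨mem_Ioo (hw1.trans h12.le) hw2, (hx.trans h12).le⟩ h12
  · rw [hL, hL]
    exact strictAntiOn_objective hn ⟨mem_Ioo hw1 (h12.trans hw2), (h12.trans hx).le⟩
      ⟨mem_Ioo (hw1.trans h12.le) hw2, hx.le⟩ h12
  · have hw := mem_Ioo hw₀ hw₁
    refine ⟨?_, objective_deriv_pos hn hw, objective_deriv_neg hn hw⟩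
    simp only [hL]
    exact hasDerivAt_objective hw
end

section
/- Let n > 0 be a real number and define the Dawid–Skene objective L(x,w) = −n·(x·log((1+w)/2) + (1−x)·log((1−w)/2)). Then L is not convex on the rectangle [0,1] × [0,1/2]: there exist points p, q ∈ [0,1] × [0,1/2] and t ∈ [0,1] such that L(t·p + (1−t)·q) > t·L(p) + (1−t)·L(q). -/
/-- The Dawid–Skene objective
`L(x,w) = -n (x log((1+w)/2) + (1-x) log((1-w)/2))` with `n > 0` is not convex on
`[0,1] × [0,1/2]`: there exist points `p, q` in the rectangle and `t ∈ [0,1]` with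
`L(t p + (1-t) q) > t L(p) + (1-t) L(q)`. -/
theorem stmt_10 (n : ℝ) (hn : 0 < n) (L : ℝ × ℝ → ℝ)
    (hL : ∀ x w : ℝ,
      L (x, w) = -n * (x * Real.log ((1 + w)/2) + (1 - x) * Real.log ((1 - w)/2))) :
    ∃ p ∈ Set.Icc (0 : ℝ) 1 ×ˢ Set.Icc (0 : ℝ) (1/2),
      ∃ q ∈ Set.Icc (0 : ℝ) 1 ×ˢ Set.Icc (0 : ℝ) (1/2),
        ∃ t ∈ Set.Icc (0 : ℝ) 1,
          L (t • p + (1 - t) • q) > t * L p + (1 - t) * L q := by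
  refine ⟨(0, 0), ⟨⟨by norm_num, by norm_num⟩, ⟨by norm_num, by norm_num⟩⟩,
    (1, 1/2), ⟨⟨by norm_num, by norm_num⟩, ⟨by norm_num, by norm_num⟩⟩,
    1/2, ⟨by norm_num, by norm_num⟩, ?_⟩
  simp only [Prod.smul_mk, Prod.mk_add_mk, smul_eq_mul]
  norm_num [hL]
  have h3 : Real.log (5/8) + Real.log (3/8) = Real.log (15/64) := by
    rw [← Real.log_mul (by norm_num) (by norm_num)]; norm_num
  have h7 : Real.log (1/2) + Real.log (3/4) = Real.log (3/8) := by
    rw [← Real.log_mul (by norm_num) (by norm_num)]; norm_num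
  have hlt : Real.log (15/64) < Real.log (3/8) :=
    Real.log_lt_log (by norm_num) (by norm_num)
  nlinarith [hlt, h3, h7]
end

section
/- Let n > 0 be a real number and define the GLAD objective L(x,w) = n·x·log(1 + e^{−w}) + n·(1−x)·log(1 + e^{w}). Then L is not convex on the rectangle [0,1] × [0,1]: there exist points p, q ∈ [0,1] × [0,1] and t ∈ [0,1] such that L(t·p + (1−t)·q) > t·L(p) + (1−t)·L(q). -/
lemma key_log : Real.log (1 + Real.exp (-(1/2 : ℝ))) + Real.log (1 + Real.exp ((1/2 : ℝ)))
    > Real.log (1 + Real.exp (-1 : ℝ)) + Real.log 2 := by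
  have ha : (0:ℝ) < 1 + Real.exp (-(1/2:ℝ)) := by positivity
  have hb : (0:ℝ) < 1 + Real.exp ((1/2:ℝ)) := by positivity
  have hc : (0:ℝ) < (1 + Real.exp (-1:ℝ)) * 2 := by positivity
  rw [← Real.log_mul (ne_of_gt ha) (ne_of_gt hb), ← Real.log_mul (by positivity) (by norm_num)]
  apply Real.log_lt_log hc
  have e1 : Real.exp (-1:ℝ) = Real.exp (-(1/2:ℝ)) * Real.exp (-(1/2:ℝ)) := by
    rw [← Real.exp_add]; norm_num
  have e2 : Real.exp (-(1/2:ℝ)) * Real.exp ((1/2:ℝ)) = 1 := by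
    rw [← Real.exp_add]; norm_num
  have h1 : (1:ℝ) < Real.exp ((1/2:ℝ)) := by
    have := Real.add_one_le_exp (1/2:ℝ); linarith
  have h2 : (0:ℝ) < Real.exp (-(1/2:ℝ)) := Real.exp_pos _
  nlinarith [mul_pos h2 h2, sq_nonneg (Real.exp ((1/2:ℝ)) - 1)]

/-- The GLAD objective
`L(x,w) = n x log(1 + e^{-w}) + n (1-x) log(1 + e^w)` with `n > 0` is not convex on
`[0,1] × [0,1]`: there exist points `p, q` in the rectangle and `t ∈ [0,1]` with
`L(t p + (1-t) q) > t L(p) + (1-t) L(q)`. -/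
theorem stmt_13 (n : ℝ) (hn : 0 < n) (L : ℝ × ℝ → ℝ)
    (hL : ∀ x w : ℝ,
      L (x, w) = n * x * Real.log (1 + Real.exp (-w)) +
        n * (1 - x) * Real.log (1 + Real.exp w)) :
    ∃ p ∈ Set.Icc (0 : ℝ) 1 ×ˢ Set.Icc (0 : ℝ) 1,
      ∃ q ∈ Set.Icc (0 : ℝ) 1 ×ˢ Set.Icc (0 : ℝ) 1,
        ∃ t ∈ Set.Icc (0 : ℝ) 1,
          L (t • p + (1 - t) • q) > t * L p + (1 - t) * L q := by
  refine ⟨(1, 1), ?_, (0, 0), ?_, 1/2, ?_, ?_⟩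
  · constructor <;> norm_num
  · constructor <;> norm_num
  · norm_num
  · have hmid : ((1/2 : ℝ)) • ((1:ℝ), (1:ℝ)) + ((1 - 1/2 : ℝ)) • ((0:ℝ), (0:ℝ))
        = ((1/2 : ℝ), (1/2 : ℝ)) := by
      apply Prod.ext <;> norm_num
    rw [hmid, hL, hL, hL]
    have h0 : Real.exp (-(0:ℝ)) = 1 := by simp
    have h0' : Real.exp (0:ℝ) = 1 := by simp
    rw [h0, h0']
    have key := key_log
    norm_num
    nlinarith [key, hn]
end

section
/- Define the minimax-entropy objective L(x,w) = −1/(1 + e^{−2w(2x−1)}). Then: (i) for every fixed w ∈ [0,1], the map x ↦ L(x,w) is non-increasing on [0,1] (strictly decreasing when w > 0); (ii) L satisfies Property P2 with g(w) = 1/2, i.e., for all x ∈ [0,1] and all 0 ≤ w1 < w2 ≤ 1, if x < 1/2 then L(x,w1) < L(x,w2), and if x > 1/2 then L(x,w1) > L(x,w2); and (iii) L(x,0) = −1/2 for all x ∈ [0,1], so L satisfies Axiom 2 (modeling spammers). -/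
lemma neg_inv_one_add_exp_lt {a b : ℝ} (h : a < b) :
    -1/(1 + Real.exp a) < -1/(1 + Real.exp b) := by
  have h1 : (0:ℝ) < 1 + Real.exp a := by positivity
  have h2 : (0:ℝ) < 1 + Real.exp b := by positivity
  have he : Real.exp a < Real.exp b := Real.exp_lt_exp.mpr h
  rw [neg_div, neg_div, neg_lt_neg_iff]
  exact one_div_lt_one_div_of_lt h1 (by linarith)

lemma neg_inv_one_add_exp_le {a b : ℝ} (h : a ≤ b) :
    -1/(1 + Real.exp a) ≤ -1/(1 + Real.exp b) := by
  rcases eq_or_lt_of_le h with rfl | h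
  · exact le_refl _
  · exact (neg_inv_one_add_exp_lt h).le

/-- The minimax-entropy objective `L(x,w) = -1/(1 + e^{-2w(2x-1)})`
satisfies: (i) for every fixed `w ∈ [0,1]`, `x ↦ L(x,w)` is non-increasing on `[0,1]`
(strictly decreasing when `w > 0`); (ii) Property P2 with `g(w) = 1/2`; (iii)
`L(x,0) = -1/2` for all `x ∈ [0,1]` (Axiom 2, modeling spammers). -/
theorem stmt_14 (L : ℝ × ℝ → ℝ)
    (hL : ∀ x w : ℝ, L (x, w) = -1/(1 + Real.exp (-2*w*(2*x - 1)))) :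
    (∀ w ∈ Set.Icc (0 : ℝ) 1, ∀ x1 ∈ Set.Icc (0 : ℝ) 1, ∀ x2 ∈ Set.Icc (0 : ℝ) 1,
      x1 ≤ x2 → L (x2, w) ≤ L (x1, w)) ∧
    (∀ w ∈ Set.Icc (0 : ℝ) 1, 0 < w → ∀ x1 ∈ Set.Icc (0 : ℝ) 1,
      ∀ x2 ∈ Set.Icc (0 : ℝ) 1, x1 < x2 → L (x2, w) < L (x1, w)) ∧
    (∀ x ∈ Set.Icc (0 : ℝ) 1, ∀ w1 w2 : ℝ, 0 ≤ w1 → w1 < w2 → w2 ≤ 1 →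
      (x < 1/2 → L (x, w1) < L (x, w2)) ∧ (x > 1/2 → L (x, w1) > L (x, w2))) ∧
    (∀ x ∈ Set.Icc (0 : ℝ) 1, L (x, 0) = -1/2) := by
  refine ⟨?_, ?_, ?_, ?_⟩
  · rintro w ⟨hw0, hw1⟩ x1 _ x2 _ hx
    rw [hL, hL]
    exact neg_inv_one_add_exp_le (by nlinarith)
  · rintro w ⟨hw0, hw1⟩ hw x1 _ x2 _ hx
    rw [hL, hL]
    exact neg_inv_one_add_exp_lt (by nlinarith)
  · rintro x _ w1 w2 h0 h12 h2
    constructor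
    · intro hx
      rw [hL, hL]
      exact neg_inv_one_add_exp_lt (by nlinarith)
    · intro hx
      rw [hL, hL]
      exact neg_inv_one_add_exp_lt (by nlinarith)
  · intro x _
    rw [hL]
    norm_num
end

section
/- Let n > 0 be a real number and let F : ℝ → ℝ be strictly increasing on [−1/2, 1/2] with 0 < F(t) < 1 for all t ∈ [−1/2, 1/2]. Define the additive-noise objective L(x,w) = −n·log(1 − F(−(x − 1/2)·w)). Then L satisfies Property P2 with g(w) = 1/2: for all x ∈ [0,1] and all 0 ≤ w1 < w2 ≤ 1, if x < 1/2 then L(x,w1) < L(x,w2), and if x > 1/2 then L(x,w1) > L(x,w2). Moreover L(x,0) = −n·log(1 − F(0)) for all x ∈ [0,1], so L satisfies Axiom 2 (modeling spammers). -/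
/-- For the additive-noise objective
`L(x,w) = -n log(1 - F(-(x - 1/2) w))` with `n > 0` and `F` strictly increasing on
`[-1/2, 1/2]` with `0 < F(t) < 1` there, `L` satisfies Property P2 with `g(w) = 1/2`,
and `L(x,0) = -n log(1 - F 0)` for all `x ∈ [0,1]` (Axiom 2, modeling spammers). -/
theorem stmt_16 (n : ℝ) (hn : 0 < n) (F : ℝ → ℝ)
    (hF : StrictMonoOn F (Set.Icc (-(1/2) : ℝ) (1/2)))
    (hF01 : ∀ t ∈ Set.Icc (-(1/2) : ℝ) (1/2), 0 < F t ∧ F t < 1)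
    (L : ℝ × ℝ → ℝ)
    (hL : ∀ x w : ℝ, L (x, w) = -n * Real.log (1 - F (-(x - 1/2) * w))) :
    (∀ x ∈ Set.Icc (0 : ℝ) 1, ∀ w1 w2 : ℝ, 0 ≤ w1 → w1 < w2 → w2 ≤ 1 →
      (x < 1/2 → L (x, w1) < L (x, w2)) ∧ (x > 1/2 → L (x, w1) > L (x, w2))) ∧
    (∀ x ∈ Set.Icc (0 : ℝ) 1, L (x, 0) = -n * Real.log (1 - F 0)) := by
  have key : ∀ t1 t2 : ℝ, t1 ∈ Set.Icc (-(1/2) : ℝ) (1/2) →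
      t2 ∈ Set.Icc (-(1/2) : ℝ) (1/2) → t1 < t2 →
      -n * Real.log (1 - F t1) < -n * Real.log (1 - F t2) := by
    intro t1 t2 h1 h2 hlt
    have hF1 := hF01 t1 h1
    have hF2 := hF01 t2 h2
    have hFF : F t1 < F t2 := hF h1 h2 hlt
    have hlog : Real.log (1 - F t2) < Real.log (1 - F t1) := by
      apply Real.log_lt_log (by linarith) (by linarith)
    nlinarith
  constructor
  · rintro x ⟨hx0, hx1⟩ w1 w2 hw1 hw12 hw2
    constructor
    · intro hx
      have ha : 0 < -(x - 1/2) := by linarith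
      have ha' : -(x - 1/2) ≤ 1/2 := by linarith
      rw [hL, hL]
      apply key
      · constructor
        · nlinarith
        · nlinarith
      · constructor
        · nlinarith
        · nlinarith
      · nlinarith
    · intro hx
      have ha : -(x - 1/2) < 0 := by linarith
      have ha' : -(1/2) ≤ -(x - 1/2) := by linarith
      rw [hL, hL]
      apply key
      · constructor
        · nlinarith
        · nlinarith
      · constructor
        · nlinarith
        · nlinarith
      · nlinarith
  · rintro x ⟨hx0, hx1⟩
    rw [hL]
    norm_num
end
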